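/- arXiv:1405.7498 — 4 statements merged into one kernel-verified Lean document; each statement's English description precedes it below -/
import Mathlib

section
/- The Randić incidence energy of the star S_n on n ≥ 2 vertices equals n - 2 + √2. -/
open Matrix BigOperators

attribute [local instance] Classical.propDecidable

noncomputable section

/-- The Randić incidence matrix of `G`. -/
def randicIncidence {V : Type} [Fintype V] (G : SimpleGraph V) :
    Matrix V G.edgeSet ℝ :=
  fun v e => if v ∈ (e : Sym2 V) then (Real.sqrt (G.degree v))⁻¹ else 0

/-- The singular values of the Randić incidence matrix of `G`, indexed by `V`. -/
def randicSingularValues {V : Type} [Fintype V] (G : SimpleGraph V) : V → ℝ :=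
  fun i => Real.sqrt
    ((Matrix.isHermitian_mul_conjTranspose_self (randicIncidence G)).eigenvalues i)

/-- The Randić incidence energy: the sum of the singular values. -/
def randicIncidenceEnergy {V : Type} [Fintype V] (G : SimpleGraph V) : ℝ :=
  ∑ i, randicSingularValues G i

/-- The star graph on `Fin n`, with center the vertex `0`. -/
def starGraph (n : ℕ) : SimpleGraph (Fin n) where
  Adj i j := i ≠ j ∧ (i.val = 0 ∨ j.val = 0)
  symm := ⟨fun i j h => ⟨h.1.symm, h.2.symm⟩⟩
  loopless := ⟨fun i h => h.1 rfl⟩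

/-!
Write `R` for the Randić incidence matrix. As no vertex of the star is isolated,
`R Rᵀ = I + B` with `B` the Randić matrix `(d_v d_w)^{-1/2} [v ~ w]`. For the star,
`B = u wᵀ + w uᵀ` where `u` is the unit vector at the centre and `w` the normalised indicator
of the leaves; `u, w` are orthonormal, so `B³ = B` and `tr B² = 2`. Hence the eigenvalues of
`R Rᵀ` lie in `{0, 1, 2}`, on which `√x` agrees with a quadratic polynomial; the energy is
therefore a combination of `tr (R Rᵀ) = n` and `tr (R Rᵀ)² = n + 2`.
-/

open Polynomial

namespace Matrix.IsHermitian

variable {n 𝕜 : Type*} [Fintype n] [DecidableEq n] [RCLike 𝕜] {A : Matrix n n 𝕜}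

theorem eval_eigenvalues_eq_zero_of_aeval_eq_zero (hA : A.IsHermitian) {p : ℝ[X]}
    (hp : aeval A p = 0) (i : n) : p.eval (hA.eigenvalues i) = 0 := by
  have : Nonempty n := ⟨i⟩
  simpa [hp, spectrum.zero_eq] using
    spectrum.subset_polynomial_aeval A p ⟨_, hA.eigenvalues_mem_spectrum_real i, rfl⟩

theorem trace_sq_eq_sum_sq_eigenvalues (hA : A.IsHermitian) :
    (A ^ 2).trace = ∑ i, (hA.eigenvalues i : 𝕜) ^ 2 := by
  conv_lhs => rw [sq, hA.spectral_theorem, ← map_mul, Unitary.conjStarAlgAut_apply,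
    trace_mul_cycle, Unitary.coe_star_mul_self, one_mul, diagonal_mul_diagonal, trace_diagonal]
  simp [sq]

end Matrix.IsHermitian

/-- Lagrange interpolation of `√` at the nodes `0, 1, 2`. -/
lemma Real.sqrt_eq_of_eq_zero_or_eq_one_or_eq_two {x : ℝ} (hx : x = 0 ∨ x = 1 ∨ x = 2) :
    √x = (2 - √2 / 2) * x + (√2 / 2 - 1) * x ^ 2 := by
  rcases hx with rfl | rfl | rfl <;> ring_nf

theorem Matrix.IsHermitian.sum_sqrt_eigenvalues_of_mul_sub_one_mul_sub_two_eq_zero {n : Type*}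
    [Fintype n] [DecidableEq n] {A : Matrix n n ℝ} (hA : A.IsHermitian)
    (hA012 : A * (A - 1) * (A - 2) = 0) :
    ∑ i, √(hA.eigenvalues i) = (2 - √2 / 2) * A.trace + (√2 / 2 - 1) * (A ^ 2).trace := by
  have hmem (i : n) : hA.eigenvalues i = 0 ∨ hA.eigenvalues i = 1 ∨ hA.eigenvalues i = 2 := by
    have := hA.eval_eigenvalues_eq_zero_of_aeval_eq_zero (p := X * (X - 1) * (X - 2))
      (by simpa [map_ofNat] using hA012) i
    simpa [sub_eq_zero, or_assoc] using this
  simp only [Real.sqrt_eq_of_eq_zero_or_eq_one_or_eq_two (hmem _), hA.trace_eq_sum_eigenvalues,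
    hA.trace_sq_eq_sum_sq_eigenvalues, Finset.sum_add_distrib, Finset.mul_sum]
  simp

section OrthonormalPair

variable {m R : Type*} [Fintype m] [CommRing R] {u w : m → R}

theorem mul_self_vecMulVec_add_vecMulVec (huu : u ⬝ᵥ u = 1) (hww : w ⬝ᵥ w = 1)
    (huw : u ⬝ᵥ w = 0) :
    (vecMulVec u w + vecMulVec w u) * (vecMulVec u w + vecMulVec w u) =
      vecMulVec u u + vecMulVec w w := by
  have hwu : w ⬝ᵥ u = 0 := by rw [dotProduct_comm, huw]
  simp [add_mul, mul_add, vecMulVec_mul_vecMulVec, huu, hww, huw, hwu, add_comm]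

theorem mul_self_mul_self_vecMulVec_add_vecMulVec (huu : u ⬝ᵥ u = 1) (hww : w ⬝ᵥ w = 1)
    (huw : u ⬝ᵥ w = 0) :
    (vecMulVec u w + vecMulVec w u) * (vecMulVec u w + vecMulVec w u) *
      (vecMulVec u w + vecMulVec w u) = vecMulVec u w + vecMulVec w u := by
  have hwu : w ⬝ᵥ u = 0 := by rw [dotProduct_comm, huw]
  rw [mul_self_vecMulVec_add_vecMulVec huu hww huw]
  simp [add_mul, mul_add, vecMulVec_mul_vecMulVec, huu, hww, huw, hwu]

theorem trace_mul_self_vecMulVec_add_vecMulVec (huu : u ⬝ᵥ u = 1) (hww : w ⬝ᵥ w = 1)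
    (huw : u ⬝ᵥ w = 0) :
    ((vecMulVec u w + vecMulVec w u) * (vecMulVec u w + vecMulVec w u)).trace = 2 := by
  rw [mul_self_vecMulVec_add_vecMulVec huu hww huw, trace_add, trace_vecMulVec,
    trace_vecMulVec, huu, hww]
  norm_num

end OrthonormalPair

namespace SimpleGraph

variable {V : Type} [Fintype V] (G : SimpleGraph V)

def randicMatrix : Matrix V V ℝ :=
  Matrix.of fun v w => if G.Adj v w then (√(G.degree v))⁻¹ * (√(G.degree w))⁻¹ else 0

lemma trace_randicMatrix : G.randicMatrix.trace = 0 := by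
  simp [trace, randicMatrix]

lemma randicIncidence_apply (v : V) (e : G.edgeSet) :
    randicIncidence G v e = (√(G.degree v))⁻¹ * G.incMatrix ℝ v e := by
  have hmem : (e : Sym2 V) ∈ G.incidenceSet v ↔ v ∈ (e : Sym2 V) := and_iff_right e.2
  simp [randicIncidence, incMatrix_apply', hmem]

lemma sum_edgeSet_incMatrix_mul_incMatrix (v w : V) :
    ∑ e : G.edgeSet, G.incMatrix ℝ v e * G.incMatrix ℝ w e =
      (G.incMatrix ℝ * (G.incMatrix ℝ)ᵀ) v w := by
  rw [Finset.sum_set_coe (f := fun e => G.incMatrix ℝ v e * G.incMatrix ℝ w e), mul_apply]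
  refine Finset.sum_subset (Finset.subset_univ _) fun e _ he => ?_
  rw [incMatrix_of_notMem_incidenceSet, zero_mul]
  exact fun h => he (Set.mem_toFinset.2 h.1)

theorem randicIncidence_mul_conjTranspose (hG : ∀ v, 0 < G.degree v) :
    randicIncidence G * (randicIncidence G)ᴴ = 1 + G.randicMatrix := by
  ext v w
  have hentry : (randicIncidence G * (randicIncidence G)ᴴ) v w =
      (√(G.degree v))⁻¹ * (√(G.degree w))⁻¹ *
        (G.incMatrix ℝ * (G.incMatrix ℝ)ᵀ) v w := by
    rw [mul_apply, ← sum_edgeSet_incMatrix_mul_incMatrix, Finset.mul_sum]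
    simp only [conjTranspose_apply, star_trivial, randicIncidence_apply]
    exact Finset.sum_congr rfl fun e _ => by ring
  rw [hentry, incMatrix_mul_transpose]
  by_cases hvw : v = w
  · subst hvw
    have hd : (0 : ℝ) < G.degree v := Nat.cast_pos.2 (hG v)
    have hsq : (√(G.degree v : ℝ))⁻¹ * (√(G.degree v : ℝ))⁻¹ * G.degree v = 1 := by
      rw [← mul_inv, Real.mul_self_sqrt hd.le, inv_mul_cancel₀ hd.ne']
    simpa [randicMatrix] using hsq
  · simp [randicMatrix, hvw]

-- Products rather than powers: a matrix power depends on a `DecidableEq` instance, which for a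
-- generic vertex type is the classical one and would not match that of `Fin n`.
theorem randicIncidenceEnergy_eq_of_randicMatrix_mul_self_mul_self (hG : ∀ v, 0 < G.degree v)
    (hcube : G.randicMatrix * G.randicMatrix * G.randicMatrix = G.randicMatrix) :
    randicIncidenceEnergy G =
      Fintype.card V + (√2 / 2 - 1) * (G.randicMatrix * G.randicMatrix).trace := by
  have hM := G.randicIncidence_mul_conjTranspose hG
  set B := G.randicMatrix
  have hB : B.trace = 0 := G.trace_randicMatrix
  have hM012 : (1 + B) * (1 + B - 1) * (1 + B - 2) = 0 := by
    rw [← sub_eq_zero.2 hcube]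
    noncomm_ring
  unfold randicIncidenceEnergy randicSingularValues
  rw [Matrix.IsHermitian.sum_sqrt_eigenvalues_of_mul_sub_one_mul_sub_two_eq_zero _ (hM ▸ hM012),
    hM, (Commute.one_left B).add_sq]
  simp [trace_add, two_mul, sq, hB]
  ring

end SimpleGraph

lemma starGraph_adj {n : ℕ} [NeZero n] {i j : Fin n} :
    (starGraph n).Adj i j ↔ i ≠ j ∧ (i = 0 ∨ j = 0) := by
  change i ≠ j ∧ (i.val = 0 ∨ j.val = 0) ↔ _
  simp only [Fin.ext_iff, Fin.val_zero]

lemma starGraph_degree_zero (k : ℕ) : (starGraph (k + 1)).degree 0 = k := by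
  rw [← SimpleGraph.card_neighborFinset_eq_degree]
  simp [SimpleGraph.neighborFinset_eq_filter, starGraph_adj, Finset.filter_ne]

lemma starGraph_degree_succ {k : ℕ} (i : Fin k) : (starGraph (k + 1)).degree i.succ = 1 := by
  rw [← SimpleGraph.card_neighborFinset_eq_degree, Finset.card_eq_one]
  refine ⟨0, Finset.ext fun j => ?_⟩
  simp only [SimpleGraph.mem_neighborFinset, starGraph_adj, Finset.mem_singleton]
  exact ⟨fun h => h.2.resolve_left i.succ_ne_zero,
    by rintro rfl; exact ⟨i.succ_ne_zero, .inr rfl⟩⟩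

lemma starGraph_degree_pos {k : ℕ} (hk : k ≠ 0) (v : Fin (k + 1)) :
    0 < (starGraph (k + 1)).degree v := by
  cases v using Fin.cases <;>
    simp [starGraph_degree_zero, starGraph_degree_succ, Nat.pos_of_ne_zero hk]

lemma starGraph_randicMatrix (k : ℕ) :
    (starGraph (k + 1)).randicMatrix =
      vecMulVec (Pi.single 0 1) (Fin.cons 0 fun _ => (√k)⁻¹) +
        vecMulVec (Fin.cons 0 fun _ => (√k)⁻¹) (Pi.single 0 1) := by
  ext i j
  cases i using Fin.cases <;> cases j using Fin.cases <;>
    simp [SimpleGraph.randicMatrix, starGraph_adj, starGraph_degree_zero, starGraph_degree_succ,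
      Fin.succ_ne_zero, (Fin.succ_ne_zero _).symm, vecMulVec_apply]

lemma dotProduct_self_cons_zero_inv_sqrt {k : ℕ} (hk : k ≠ 0) :
    (Fin.cons 0 fun _ => (√k)⁻¹ : Fin (k + 1) → ℝ) ⬝ᵥ (Fin.cons 0 fun _ => (√k)⁻¹) =
      1 := by
  have hk' : (k : ℝ) ≠ 0 := Nat.cast_ne_zero.2 hk
  simp [dotProduct, Fin.sum_univ_succ, ← mul_inv, hk']

lemma starGraph_randicMatrix_mul_self_mul_self {k : ℕ} (hk : k ≠ 0) :
    (starGraph (k + 1)).randicMatrix * (starGraph (k + 1)).randicMatrix *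
      (starGraph (k + 1)).randicMatrix = (starGraph (k + 1)).randicMatrix := by
  rw [starGraph_randicMatrix]
  exact mul_self_mul_self_vecMulVec_add_vecMulVec (by simp)
    (dotProduct_self_cons_zero_inv_sqrt hk) (by simp)

lemma trace_starGraph_randicMatrix_mul_self {k : ℕ} (hk : k ≠ 0) :
    ((starGraph (k + 1)).randicMatrix * (starGraph (k + 1)).randicMatrix).trace = 2 := by
  rw [starGraph_randicMatrix]
  exact trace_mul_self_vecMulVec_add_vecMulVec (by simp)
    (dotProduct_self_cons_zero_inv_sqrt hk) (by simp)

theorem randicIncidenceEnergy_star {n : ℕ} (hn : 2 ≤ n) :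
    randicIncidenceEnergy (starGraph n) = (n : ℝ) - 2 + Real.sqrt 2 := by
  obtain ⟨k, rfl⟩ : ∃ k, n = k + 1 := ⟨n - 1, by omega⟩
  have hk : k ≠ 0 := by omega
  rw [SimpleGraph.randicIncidenceEnergy_eq_of_randicMatrix_mul_self_mul_self _
    (starGraph_degree_pos hk) (starGraph_randicMatrix_mul_self_mul_self hk),
    trace_starGraph_randicMatrix_mul_self hk, Fintype.card_fin]
  push_cast
  ring
end
end

section
/- The singular values of the Randić incidence matrix of the star S_n (n ≥ 2) are √2, 1 (with multiplicity n-2), and 0. -/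
/-!
Let `M` be the Randić incidence matrix of `S_n`. Every edge contains the centre, where its entry
is `1 / √(n - 1)`, and every leaf lies on exactly one edge, with entry `1`. Hence
`Mᵀ M = 1 + r rᵀ` with `r` the constant unit vector `1 / √(n - 1)`, whose characteristic
polynomial is `(X - 1) ^ (n - 2) * (X - 2)`. As `M` has one more row than columns,
`M Mᵀ` has characteristic polynomial `X * (X - 1) ^ (n - 2) * (X - 2)`.
-/

open Matrix BigOperators

attribute [local instance] Classical.propDecidable

noncomputable section

open Polynomial

namespace Matrix

theorem charpoly_one_add_vecMulVec {R n : Type*} [CommRing R] [Fintype n] [DecidableEq n]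
    [Nonempty n] (u v : n → R) :
    (1 + vecMulVec u v).charpoly = (X - 1) ^ (Fintype.card n - 1) * (X - C (1 + u ⬝ᵥ v)) := by
  have hn : Fintype.card n - 1 + 1 = Fintype.card n := Nat.sub_add_cancel Fintype.card_pos
  rw [show 1 + vecMulVec u v = vecMulVec u v - scalar n (-1 : R) by
      simp [sub_eq_add_neg, add_comm], charpoly_sub_scalar, charpoly_vecMulVec, ← hn]
  simp [smul_eq_C_mul, pow_succ]
  ring

theorem IsHermitian.map_eigenvalues_eq_roots_charpoly {n : Type*} [Fintype n] [DecidableEq n]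
    {A : Matrix n n ℝ} (hA : A.IsHermitian) :
    Multiset.map hA.eigenvalues Finset.univ.val = A.charpoly.roots := by
  simp [hA.roots_charpoly_eq_eigenvalues]

end Matrix

namespace starGraph

variable {n : ℕ}

theorem adj_iff {i j : Fin (n + 1)} :
    (starGraph (n + 1)).Adj i j ↔ i ≠ j ∧ (i = 0 ∨ j = 0) := by
  simp [starGraph, Fin.val_eq_zero_iff]

theorem mem_edgeSet_iff {e : Sym2 (Fin (n + 1))} :
    e ∈ (starGraph (n + 1)).edgeSet ↔ ∃ a, a ≠ 0 ∧ e = s(0, a) := by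
  induction e using Sym2.ind with
  | _ i j =>
    rw [SimpleGraph.mem_edgeSet, adj_iff]
    constructor
    · rintro ⟨hij, rfl | rfl⟩
      · exact ⟨j, hij.symm, rfl⟩
      · exact ⟨i, hij, Sym2.eq_swap⟩
    · rintro ⟨a, ha, h⟩
      rcases Sym2.eq_iff.mp h with ⟨rfl, rfl⟩ | ⟨rfl, rfl⟩
      exacts [⟨ha.symm, .inl rfl⟩, ⟨ha, .inr rfl⟩]

theorem degree_zero : (starGraph (n + 1)).degree 0 = n := by
  have : (starGraph (n + 1)).neighborFinset 0 = Finset.univ.erase 0 := by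
    ext j; simp [adj_iff, eq_comm]
  simp [SimpleGraph.degree, this]

theorem degree_of_ne_zero {a : Fin (n + 1)} (ha : a ≠ 0) : (starGraph (n + 1)).degree a = 1 := by
  have : (starGraph (n + 1)).neighborFinset a = {0} := by
    ext j
    simp only [SimpleGraph.mem_neighborFinset, adj_iff, ha, false_or, Finset.mem_singleton,
      and_iff_right_iff_imp]
    rintro rfl
    exact ha
  simp [SimpleGraph.degree, this]

theorem card_edgeSet : Fintype.card (starGraph (n + 1)).edgeSet = n := by
  have := (starGraph (n + 1)).sum_degrees_eq_twice_card_edges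
  rw [Fin.sum_univ_succ, degree_zero] at this
  simp only [degree_of_ne_zero (Fin.succ_ne_zero _), Finset.sum_const, Finset.card_univ,
    Fintype.card_fin, smul_eq_mul, mul_one] at this
  rw [← SimpleGraph.edgeFinset_card]
  omega

theorem randicIncidence_apply (v a : Fin (n + 1)) (h : s(0, a) ∈ (starGraph (n + 1)).edgeSet) :
    randicIncidence (starGraph (n + 1)) v ⟨s(0, a), h⟩ =
      if v = 0 then (√n)⁻¹ else if v = a then 1 else 0 := by
  by_cases hv : v = 0
  · subst hv; simp [randicIncidence, degree_zero]
  · simp [randicIncidence, hv, degree_of_ne_zero hv]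

theorem conjTranspose_randicIncidence_mul_self :
    (randicIncidence (starGraph (n + 1)))ᴴ * randicIncidence (starGraph (n + 1)) =
      1 + vecMulVec (fun _ => (√n)⁻¹) (fun _ => (√n)⁻¹) := by
  ext ⟨e, he⟩ ⟨f, hf⟩
  obtain ⟨a, ha, rfl⟩ := mem_edgeSet_iff.mp he
  obtain ⟨b, hb, rfl⟩ := mem_edgeSet_iff.mp hf
  obtain ⟨a, rfl⟩ := Fin.exists_succ_eq.mpr ha
  obtain ⟨b, rfl⟩ := Fin.exists_succ_eq.mpr hb
  simp [mul_apply, Fin.sum_univ_succ, randicIncidence_apply, one_apply, vecMulVec_apply, add_comm,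
    @eq_comm _ a b]

theorem charpoly_randicIncidence_mul_conjTranspose [NeZero n] :
    (randicIncidence (starGraph (n + 1)) * (randicIncidence (starGraph (n + 1)))ᴴ).charpoly =
      X * (X - 1) ^ (n - 1) * (X - C 2) := by
  have : Nonempty (starGraph (n + 1)).edgeSet := by
    rw [← Fintype.card_pos_iff, card_edgeSet]; exact Nat.pos_of_neZero n
  have hdot : (fun _ => (√n)⁻¹) ⬝ᵥ
      (fun _ : (starGraph (n + 1)).edgeSet => (√(n : ℝ))⁻¹) = 1 := by
    rw [dotProduct, Finset.sum_const, Finset.card_univ, card_edgeSet, ← sq, inv_pow,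
      Real.sq_sqrt n.cast_nonneg, nsmul_eq_mul, mul_inv_cancel₀ (NeZero.ne _)]
  rw [charpoly_mul_comm_of_le _ _ (by rw [card_edgeSet, Fintype.card_fin]; omega),
    conjTranspose_randicIncidence_mul_self, charpoly_one_add_vecMulVec, hdot, card_edgeSet,
    Fintype.card_fin]
  norm_num [mul_assoc]

theorem eigenvalues_randicIncidence_mul_conjTranspose [NeZero n] :
    Multiset.map
      (isHermitian_mul_conjTranspose_self (randicIncidence (starGraph (n + 1)))).eigenvalues
      Finset.univ.val = 2 ::ₘ 0 ::ₘ Multiset.replicate (n - 1) 1 := by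
  have hne : (X * (X - 1) ^ (n - 1) * (X - C 2) : ℝ[X]) ≠ 0 := by
    rw [← charpoly_randicIncidence_mul_conjTranspose]; exact (charpoly_monic _).ne_zero
  rw [IsHermitian.map_eigenvalues_eq_roots_charpoly, charpoly_randicIncidence_mul_conjTranspose,
    roots_mul hne, roots_mul (left_ne_zero_of_mul hne), roots_X, roots_pow, ← C_1, roots_X_sub_C,
    roots_X_sub_C, Multiset.nsmul_singleton, add_comm _ {2}, Multiset.singleton_add,
    Multiset.singleton_add]

theorem map_randicSingularValues [NeZero n] :
    Multiset.map (randicSingularValues (starGraph (n + 1))) Finset.univ.val =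
      √2 ::ₘ 0 ::ₘ Multiset.replicate (n - 1) 1 := by
  have h := congrArg (Multiset.map Real.sqrt)
    (eigenvalues_randicIncidence_mul_conjTranspose (n := n))
  simp only [Multiset.map_map, Multiset.map_cons, Multiset.map_replicate, Real.sqrt_zero,
    Real.sqrt_one] at h
  rw [← h]
  refine Multiset.map_congr rfl fun i _ => ?_
  unfold randicSingularValues
  -- `randicSingularValues` carries the classical `DecidableEq` instance, not `instDecidableEqFin`
  congr

end starGraph

theorem randicSingularValues_star {n : ℕ} (hn : 2 ≤ n) :
    Multiset.map (randicSingularValues (starGraph n)) Finset.univ.val =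
      Real.sqrt 2 ::ₘ (0 : ℝ) ::ₘ Multiset.replicate (n - 2) (1 : ℝ) := by
  obtain ⟨m, rfl⟩ : ∃ m, n = m + 1 := ⟨n - 1, by omega⟩
  have : NeZero m := ⟨by omega⟩
  exact starGraph.map_randicSingularValues
end
end

section
/- Let G be a graph of order n ≥ 2 with no isolated vertices. Then I_RE(G) ≤ √2 + √((n-1)(n-2)), with equality if and only if G is the complete graph K_n. -/
open Matrix BigOperators

attribute [local instance] Classical.propDecidable

noncomputable section

/-!
The eigenvalues `μᵢ` of `Q = I_R I_Rᴴ = I + D^{-1/2} A D^{-1/2}` are nonnegative, sum to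
`tr Q = n`, and include `2` (eigenvector `√d`). By Cauchy–Schwarz the other `n - 1` eigenvalues,
which sum to `n - 2`, contribute at most `√((n - 1)(n - 2))` to the energy, with equality iff they
are all equal, i.e. iff `∑ μᵢ²` takes its least possible value `4 + (n - 2)² / (n - 1)`. Since
`∑ μᵢ² = tr Q² = n + ∑_{u ∼ v} 1 / (d_u d_v)`, this means `(n - 1) ∑_{u ∼ v} 1 / (d_u d_v) = n`.
As `d_v ≤ n - 1`, each vertex `u` contributes `∑_{v ∼ u} 1 / (d_u d_v) ≥ 1 / (n - 1)`, with
equality iff all neighbours of `u` have degree `n - 1`; so equality holds iff `G = K_n`.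
-/

open Finset

theorem Finset.sum_sum_sub_sq {ι R : Type*} [CommRing R] (s : Finset ι) (f : ι → R) :
    ∑ i ∈ s, ∑ j ∈ s, (f i - f j) ^ 2 = 2 * (#s * ∑ i ∈ s, f i ^ 2 - (∑ i ∈ s, f i) ^ 2) := by
  simp only [sub_sq, sum_add_distrib, sum_sub_distrib, sum_const, nsmul_eq_mul, ← mul_sum,
    ← sum_mul]
  ring

theorem Finset.sq_sum_eq_card_mul_sum_sq_iff {ι R : Type*} [CommRing R] [LinearOrder R]
    [IsStrictOrderedRing R] (s : Finset ι) (f : ι → R) :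
    (∑ i ∈ s, f i) ^ 2 = #s * ∑ i ∈ s, f i ^ 2 ↔ ∀ i ∈ s, ∀ j ∈ s, f i = f j := by
  rw [eq_comm, ← sub_eq_zero, ← mul_eq_zero_iff_left (two_ne_zero' R), ← sum_sum_sub_sq,
    sum_eq_zero_iff_of_nonneg fun i _ => sum_nonneg fun j _ => sq_nonneg _]
  refine forall₂_congr fun i _ => ?_
  simp only [sum_eq_zero_iff_of_nonneg fun j _ => sq_nonneg _, sq_eq_zero_iff, sub_eq_zero]

namespace Real

variable {ι : Type*} {s : Finset ι} {f : ι → ℝ}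

theorem sum_sqrt_le_sqrt_card_mul_sum (hf : ∀ i ∈ s, 0 ≤ f i) :
    ∑ i ∈ s, √(f i) ≤ √(#s * ∑ i ∈ s, f i) := by
  refine le_sqrt_of_sq_le ?_
  calc (∑ i ∈ s, √(f i)) ^ 2 ≤ #s * ∑ i ∈ s, √(f i) ^ 2 := sq_sum_le_card_mul_sum_sq
    _ = #s * ∑ i ∈ s, f i := by rw [sum_congr rfl fun i hi => sq_sqrt (hf i hi)]

theorem sum_sqrt_eq_sqrt_card_mul_sum_iff (hf : ∀ i ∈ s, 0 ≤ f i) :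
    ∑ i ∈ s, √(f i) = √(#s * ∑ i ∈ s, f i) ↔ (∑ i ∈ s, f i) ^ 2 = #s * ∑ i ∈ s, f i ^ 2 := by
  have hsq : ∑ i ∈ s, f i = ∑ i ∈ s, √(f i) ^ 2 :=
    sum_congr rfl fun i hi => (sq_sqrt (hf i hi)).symm
  calc ∑ i ∈ s, √(f i) = √(#s * ∑ i ∈ s, f i)
        ↔ (∑ i ∈ s, √(f i)) ^ 2 = #s * ∑ i ∈ s, √(f i) ^ 2 := by
          rw [eq_comm, sqrt_eq_iff_eq_sq (mul_nonneg (Nat.cast_nonneg _) (sum_nonneg hf))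
            (by positivity), hsq, eq_comm]
    _ ↔ ∀ i ∈ s, ∀ j ∈ s, √(f i) = √(f j) := sq_sum_eq_card_mul_sum_sq_iff s _
    _ ↔ ∀ i ∈ s, ∀ j ∈ s, f i = f j :=
          forall₂_congr fun i hi => forall₂_congr fun j hj => sqrt_inj (hf i hi) (hf j hj)
    _ ↔ (∑ i ∈ s, f i) ^ 2 = #s * ∑ i ∈ s, f i ^ 2 := (sq_sum_eq_card_mul_sum_sq_iff s f).symm

end Real

section SpectrumWithEigenvalueTwo

variable {ι : Type*} [Fintype ι] {μ : ι → ℝ} {i₀ : ι}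

local notation "n" => (Fintype.card ι : ℝ)

theorem card_erase_eq_and_sum_erase_eq (hi₀ : μ i₀ = 2) (hsum : ∑ i, μ i = n) :
    (#(univ.erase i₀) : ℝ) = n - 1 ∧ ∑ i ∈ univ.erase i₀, μ i = n - 2 := by
  refine ⟨?_, ?_⟩
  · rw [card_erase_of_mem (mem_univ _), card_univ, Nat.cast_pred (Fintype.card_pos_iff.2 ⟨i₀⟩)]
  · rw [← hsum, ← add_sum_erase _ _ (mem_univ i₀), hi₀, add_sub_cancel_left]

theorem sum_sqrt_le_of_sum_eq_card (hμ : ∀ i, 0 ≤ μ i) (hi₀ : μ i₀ = 2)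
    (hsum : ∑ i, μ i = n) :
    ∑ i, √(μ i) ≤ √2 + √((n - 1) * (n - 2)) := by
  obtain ⟨hcard, hsum'⟩ := card_erase_eq_and_sum_erase_eq hi₀ hsum
  rw [← add_sum_erase _ _ (mem_univ i₀), hi₀, ← hcard, ← hsum']
  gcongr
  exact Real.sum_sqrt_le_sqrt_card_mul_sum fun i _ => hμ i

theorem sum_sqrt_eq_iff_of_sum_eq_card (hμ : ∀ i, 0 ≤ μ i) (hi₀ : μ i₀ = 2)
    (hsum : ∑ i, μ i = n) :
    ∑ i, √(μ i) = √2 + √((n - 1) * (n - 2)) ↔ (n - 1) * (∑ i, μ i ^ 2 - n) = n := by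
  obtain ⟨hcard, hsum'⟩ := card_erase_eq_and_sum_erase_eq hi₀ hsum
  rw [← add_sum_erase _ _ (mem_univ i₀), hi₀, add_right_inj, ← hcard, ← hsum',
    Real.sum_sqrt_eq_sqrt_card_mul_sum_iff fun i _ => hμ i, hcard, hsum',
    ← add_sum_erase _ _ (mem_univ i₀), hi₀]
  constructor <;> intro h <;> linear_combination -h

end SpectrumWithEigenvalueTwo

namespace Matrix.IsHermitian

variable {𝕜 n : Type*} [RCLike 𝕜] [Fintype n] [DecidableEq n] {A : Matrix n n 𝕜}
  (hA : A.IsHermitian)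

theorem exists_eigenvalues_eq_of_mulVec_eq_smul {x : n → 𝕜} (hx : x ≠ 0) {t : ℝ}
    (h : A *ᵥ x = (t : 𝕜) • x) : ∃ i, hA.eigenvalues i = t := by
  have hvec : Module.End.HasEigenvector A.toLin' (t : 𝕜) x :=
    Module.End.hasEigenvector_iff.2 ⟨Module.End.mem_eigenspace_iff.2 (by rwa [toLin'_apply]), hx⟩
  have ht : t ∈ spectrum ℝ A := by
    rw [← spectrum.algebraMap_mem_iff 𝕜, ← spectrum_toLin']
    exact (Module.End.hasEigenvalue_of_hasEigenvector hvec).mem_spectrum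
  rwa [hA.spectrum_real_eq_range_eigenvalues] at ht

theorem trace_mul_self_eq_sum_sq_eigenvalues :
    (A * A).trace = ∑ i, (hA.eigenvalues i : 𝕜) ^ 2 := by
  conv_lhs => rw [hA.spectral_theorem, ← map_mul]
  rw [Unitary.conjStarAlgAut_apply, trace_mul_cycle, ← Matrix.mul_assoc,
    Unitary.coe_star_mul_self, Matrix.one_mul, diagonal_mul_diagonal, trace_diagonal]
  simp [sq]

end Matrix.IsHermitian

namespace SimpleGraph

section IncMatrix

variable {V R : Type*} [Fintype V] [DecidableEq V] [Semiring R] (G : SimpleGraph V)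
  [DecidableRel G.Adj]

theorem incMatrix_mul_transpose_eq_degMatrix_add_adjMatrix :
    G.incMatrix R * (G.incMatrix R)ᵀ = G.degMatrix R + G.adjMatrix R := by
  ext a b
  rw [incMatrix_mul_transpose, Matrix.add_apply, degMatrix, diagonal_apply, adjMatrix_apply,
    of_apply]
  split_ifs with hab hadj <;> simp_all

theorem incMatrix_submatrix_edgeSet_mul_transpose :
    (G.incMatrix R).submatrix id ((↑) : G.edgeSet → Sym2 V) *
        ((G.incMatrix R).submatrix id ((↑) : G.edgeSet → Sym2 V))ᵀ =
      G.incMatrix R * (G.incMatrix R)ᵀ := by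
  ext a b
  simp only [mul_apply, submatrix_apply, transpose_apply, id]
  have hnonedges : ∑ e : {e // e ∉ G.edgeSet}, G.incMatrix R a e * G.incMatrix R b e = 0 :=
    Fintype.sum_eq_zero _ fun e => by
      rw [incMatrix_of_notMem_incidenceSet G fun he => e.2 he.1, zero_mul]
  rw [← Fintype.sum_subtype_add_sum_subtype (· ∈ G.edgeSet), hnonedges, add_zero]

end IncMatrix

variable {V : Type*} [Fintype V] (G : SimpleGraph V)

def normalizedAdjMatrix : Matrix V V ℝ :=
  diagonal (fun v => (√(G.degree v))⁻¹) * G.adjMatrix ℝ * diagonal (fun v => (√(G.degree v))⁻¹)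

/-- Twice the general Randić index `R₋₁(G) = ∑_{uv ∈ E(G)} 1 / (d_u d_v)`. -/
def twiceRandicIndexNegOne : ℝ :=
  ∑ u, ∑ v ∈ G.neighborFinset u, ((G.degree u : ℝ) * G.degree v)⁻¹

theorem normalizedAdjMatrix_apply (u v : V) :
    G.normalizedAdjMatrix u v =
      if G.Adj u v then (√(G.degree u))⁻¹ * (√(G.degree v))⁻¹ else 0 := by
  rw [normalizedAdjMatrix, mul_diagonal, diagonal_mul, adjMatrix_apply]
  split_ifs <;> simp

theorem trace_normalizedAdjMatrix : G.normalizedAdjMatrix.trace = 0 := by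
  simp [trace, normalizedAdjMatrix_apply]

theorem trace_mul_self_normalizedAdjMatrix :
    (G.normalizedAdjMatrix * G.normalizedAdjMatrix).trace = G.twiceRandicIndexNegOne := by
  have hentry : ∀ u v, G.normalizedAdjMatrix u v * G.normalizedAdjMatrix v u =
      if G.Adj u v then ((G.degree u : ℝ) * G.degree v)⁻¹ else 0 := by
    intro u v
    rw [normalizedAdjMatrix_apply, normalizedAdjMatrix_apply, G.adj_comm v u]
    split_ifs
    · rw [mul_mul_mul_comm, mul_comm (√_)⁻¹, mul_mul_mul_comm, ← mul_inv, ← mul_inv,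
        Real.mul_self_sqrt (Nat.cast_nonneg _), Real.mul_self_sqrt (Nat.cast_nonneg _),
        mul_inv, mul_comm]
    · rw [zero_mul]
  refine sum_congr rfl fun u _ => ?_
  rw [diag_apply, mul_apply, sum_congr rfl fun v _ => hentry u v, ← sum_filter,
    neighborFinset_eq_filter]

variable {G}

theorem normalizedAdjMatrix_mulVec_sqrt_degree (hdeg : ∀ v, 0 < G.degree v) :
    G.normalizedAdjMatrix *ᵥ (fun v => √(G.degree v)) = fun v => √(G.degree v) := by
  have hone : diagonal (fun v => (√(G.degree v))⁻¹) *ᵥ (fun v => √(G.degree v)) =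
      Function.const V 1 := funext fun v => by
    rw [mulVec_diagonal, inv_mul_cancel₀ (Real.sqrt_pos.2 (Nat.cast_pos.2 (hdeg v))).ne']
    rfl
  rw [normalizedAdjMatrix, ← mulVec_mulVec, ← mulVec_mulVec, hone]
  funext v
  rw [mulVec_diagonal, adjMatrix_mulVec_const_apply, mul_one, inv_mul_eq_div, Real.div_sqrt]

theorem card_sub_one_mul_twiceRandicIndexNegOne_sub_card (hdeg : ∀ v, 0 < G.degree v) :
    (Fintype.card V - 1 : ℝ) * G.twiceRandicIndexNegOne - Fintype.card V =
      ∑ u, ∑ v ∈ G.neighborFinset u,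
        (G.degree u : ℝ)⁻¹ * ((Fintype.card V - 1) / G.degree v - 1) := by
  have hd : ∀ v, (G.degree v : ℝ) ≠ 0 := fun v => Nat.cast_ne_zero.2 (hdeg v).ne'
  have hcard : (Fintype.card V : ℝ) = ∑ u, ∑ _v ∈ G.neighborFinset u, (G.degree u : ℝ)⁻¹ := by
    simp only [sum_const, card_neighborFinset_eq_degree, nsmul_eq_mul, mul_inv_cancel₀ (hd _),
      card_univ, mul_one]
  rw [twiceRandicIndexNegOne, hcard, mul_sum, ← sum_sub_distrib]
  refine sum_congr rfl fun u _ => ?_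
  rw [mul_sum, ← sum_sub_distrib]
  refine sum_congr rfl fun v _ => ?_
  field_simp [hd u, hd v]

theorem card_sub_one_mul_twiceRandicIndexNegOne_eq_card_iff (hdeg : ∀ v, 0 < G.degree v) :
    (Fintype.card V - 1 : ℝ) * G.twiceRandicIndexNegOne = Fintype.card V ↔ G = ⊤ := by
  have hd : ∀ v, (0 : ℝ) < G.degree v := fun v => Nat.cast_pos.2 (hdeg v)
  have hdle : ∀ v, (G.degree v : ℝ) ≤ Fintype.card V - 1 := fun v => by
    rw [le_sub_iff_add_le, ← Nat.cast_add_one, Nat.cast_le]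
    exact G.degree_lt_card_verts v
  have hterm : ∀ u v, 0 ≤ (G.degree u : ℝ)⁻¹ * ((Fintype.card V - 1) / G.degree v - 1) :=
    fun u v => mul_nonneg (inv_nonneg.2 (hd u).le) (sub_nonneg.2 ((one_le_div (hd v)).2 (hdle v)))
  have hzero : ∀ u v, (G.degree u : ℝ)⁻¹ * ((Fintype.card V - 1) / G.degree v - 1) = 0 ↔
      G.IsUniversal v := fun u v => by
    rw [mul_eq_zero, or_iff_right (inv_ne_zero (hd u).ne'), sub_eq_zero,
      div_eq_one_iff_eq (hd v).ne', ← degree_eq_card_sub_one, eq_comm,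
      ← Nat.cast_pred (Fintype.card_pos_iff.2 ⟨v⟩), Nat.cast_inj]
  rw [← sub_eq_zero, card_sub_one_mul_twiceRandicIndexNegOne_sub_card hdeg,
    sum_eq_zero_iff_of_nonneg fun u _ => sum_nonneg fun v _ => hterm u v,
    eq_top_iff_forall_isUniversal]
  simp only [sum_eq_zero_iff_of_nonneg fun v _ => hterm _ v, hzero, mem_univ, true_implies,
    mem_neighborFinset]
  refine ⟨fun h v => ?_, fun h u v _ => h v⟩
  obtain ⟨u, hu⟩ := (G.degree_pos_iff_exists_adj v).1 (hdeg v)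
  exact h u v hu.symm

end SimpleGraph

section RandicIncidence

variable {V : Type} [Fintype V] (G : SimpleGraph V)

theorem randicIncidence_eq_diagonal_mul_incMatrix :
    randicIncidence G = diagonal (fun v => (√(G.degree v))⁻¹) *
      (G.incMatrix ℝ).submatrix id ((↑) : G.edgeSet → Sym2 V) := by
  ext v e
  simp [randicIncidence, diagonal_mul, SimpleGraph.incMatrix_apply',
    SimpleGraph.incidenceSet, e.2]

theorem randicIncidence_mul_conjTranspose :
    randicIncidence G * (randicIncidence G)ᴴ =
      diagonal (fun v => (√(G.degree v))⁻¹) * (G.degMatrix ℝ + G.adjMatrix ℝ) *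
        diagonal (fun v => (√(G.degree v))⁻¹) := by
  rw [randicIncidence_eq_diagonal_mul_incMatrix, conjTranspose_mul,
    conjTranspose_eq_transpose_of_trivial, diagonal_conjTranspose, star_trivial,
    Matrix.mul_assoc, ← Matrix.mul_assoc _ _ (diagonal _),
    G.incMatrix_submatrix_edgeSet_mul_transpose,
    G.incMatrix_mul_transpose_eq_degMatrix_add_adjMatrix, Matrix.mul_assoc]

variable {G}

theorem randicIncidence_mul_conjTranspose_eq_one_add (hdeg : ∀ v, 0 < G.degree v) :
    randicIncidence G * (randicIncidence G)ᴴ = 1 + G.normalizedAdjMatrix := by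
  rw [randicIncidence_mul_conjTranspose, Matrix.mul_add, Matrix.add_mul, SimpleGraph.degMatrix,
    diagonal_mul_diagonal, diagonal_mul_diagonal, ← diagonal_one,
    SimpleGraph.normalizedAdjMatrix]
  congr
  funext v
  have hd : (0 : ℝ) < G.degree v := Nat.cast_pos.2 (hdeg v)
  rw [mul_right_comm, ← mul_inv, Real.mul_self_sqrt hd.le, inv_mul_cancel₀ hd.ne']

variable (G)

def randicEigenvalues : V → ℝ :=
  (isHermitian_mul_conjTranspose_self (randicIncidence G)).eigenvalues

theorem randicEigenvalues_nonneg (i : V) : 0 ≤ randicEigenvalues G i :=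
  eigenvalues_self_mul_conjTranspose_nonneg _ i

variable {G}

theorem sum_randicEigenvalues (hdeg : ∀ v, 0 < G.degree v) :
    ∑ i, randicEigenvalues G i = Fintype.card V := by
  calc ∑ i, randicEigenvalues G i = (randicIncidence G * (randicIncidence G)ᴴ).trace := by
        rw [(isHermitian_mul_conjTranspose_self (randicIncidence G)).trace_eq_sum_eigenvalues]
        rfl
    _ = Fintype.card V := by
        rw [randicIncidence_mul_conjTranspose_eq_one_add hdeg, trace_add, trace_one,
          G.trace_normalizedAdjMatrix, add_zero]

theorem sum_sq_randicEigenvalues (hdeg : ∀ v, 0 < G.degree v) :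
    ∑ i, randicEigenvalues G i ^ 2 = Fintype.card V + G.twiceRandicIndexNegOne := by
  calc ∑ i, randicEigenvalues G i ^ 2 =
        (randicIncidence G * (randicIncidence G)ᴴ *
          (randicIncidence G * (randicIncidence G)ᴴ)).trace := by
        rw [(isHermitian_mul_conjTranspose_self
          (randicIncidence G)).trace_mul_self_eq_sum_sq_eigenvalues]
        rfl
    _ = Fintype.card V + G.twiceRandicIndexNegOne := by
        simp only [randicIncidence_mul_conjTranspose_eq_one_add hdeg, Matrix.add_mul,
          Matrix.mul_add, Matrix.one_mul, Matrix.mul_one, trace_add, trace_one,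
          G.trace_normalizedAdjMatrix, G.trace_mul_self_normalizedAdjMatrix]
        ring

theorem exists_randicEigenvalues_eq_two [Nonempty V] (hdeg : ∀ v, 0 < G.degree v) :
    ∃ i, randicEigenvalues G i = 2 := by
  have hsqrt : ∀ v, 0 < √(G.degree v) := fun v => Real.sqrt_pos.2 (Nat.cast_pos.2 (hdeg v))
  refine IsHermitian.exists_eigenvalues_eq_of_mulVec_eq_smul _ (x := fun v => √(G.degree v))
    (fun h => (hsqrt _).ne' (congrFun h (Classical.arbitrary V))) ?_
  rw [randicIncidence_mul_conjTranspose_eq_one_add hdeg, add_mulVec, one_mulVec,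
    SimpleGraph.normalizedAdjMatrix_mulVec_sqrt_degree hdeg, RCLike.ofReal_real_eq_id, id,
    two_smul]

end RandicIncidence

theorem randicIncidenceEnergy_upper_bound {V : Type} [Fintype V] (G : SimpleGraph V)
    (hn : 2 ≤ Fintype.card V) (hdeg : ∀ v : V, 0 < G.degree v) :
    randicIncidenceEnergy G ≤
        Real.sqrt 2 + Real.sqrt (((Fintype.card V : ℝ) - 1) * ((Fintype.card V : ℝ) - 2)) ∧
      (randicIncidenceEnergy G =
          Real.sqrt 2 + Real.sqrt (((Fintype.card V : ℝ) - 1) * ((Fintype.card V : ℝ) - 2)) ↔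
        G = ⊤) := by
  have : Nonempty V := Fintype.card_pos_iff.1 (by omega)
  obtain ⟨i₀, hi₀⟩ := exists_randicEigenvalues_eq_two hdeg
  have hsum := sum_randicEigenvalues hdeg
  refine ⟨sum_sqrt_le_of_sum_eq_card (randicEigenvalues_nonneg G) hi₀ hsum, ?_⟩
  rw [← G.card_sub_one_mul_twiceRandicIndexNegOne_eq_card_iff hdeg,
    ← add_sub_cancel_left (Fintype.card V : ℝ) G.twiceRandicIndexNegOne,
    ← sum_sq_randicEigenvalues hdeg]
  exact sum_sqrt_eq_iff_of_sum_eq_card (randicEigenvalues_nonneg G) hi₀ hsum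
end
end

section
/- Let G be a nonempty graph with clique number c ≥ 2. Then I_RE(G) ≥ √2 + √((c-1)(c-2)). In particular, any graph with at least one edge satisfies I_RE(G) ≥ √2. -/
open Matrix BigOperators

attribute [local instance] Classical.propDecidable

noncomputable section

open Finset

/-!
The squared singular values of the Randić incidence matrix `R` are the eigenvalues of `R Rᵀ`,
and by the Courant–Fischer principle a `k`-dimensional subspace on which the Rayleigh quotient of
`R Rᵀ` is at least `t` forces `k` eigenvalues `≥ t`. The vector `u = (√d_v)_v` has Rayleigh quotient
exactly `2`: every edge contributes `2² = 4` to `‖Rᵀ u‖²`, while `‖u‖² = ∑ d_v = 2|E|`. On vectors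
supported on a maximum clique `S`, `|S| = c`, the matrix `R Rᵀ` is `I + D^{-1/2} A D^{-1/2}` and
`d_v ≥ c - 1`, so the quotient is at least `(c - 2)/(c - 1)`. Hence one singular value is at least
`√2` and `c - 1` others are at least `√((c - 2)/(c - 1))`, which sum to `√2 + √((c - 1)(c - 2))`.
-/

namespace Matrix.IsHermitian

variable {n : Type*} [Fintype n] [DecidableEq n] {M : Matrix n n ℝ} (hM : M.IsHermitian)

lemma dotProduct_mulVec_eq_sum_eigenvalues_mul_sq (x : n → ℝ) :
    x ⬝ᵥ (M *ᵥ x) =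
      ∑ i, hM.eigenvalues i * ((hM.eigenvectorUnitary : Matrix n n ℝ)ᵀ *ᵥ x) i ^ 2 := by
  conv_lhs => rw [hM.spectral_theorem, Unitary.conjStarAlgAut_apply]
  rw [← mulVec_mulVec, ← mulVec_mulVec, dotProduct_mulVec, star_eq_conjTranspose,
    conjTranspose_eq_transpose_of_trivial, ← mulVec_transpose]
  simp [mulVec_diagonal, dotProduct, sq, mul_left_comm]

lemma dotProduct_self_eq_eigenvectorUnitary_transpose_mulVec (x : n → ℝ) :
    x ⬝ᵥ x = ((hM.eigenvectorUnitary : Matrix n n ℝ)ᵀ *ᵥ x) ⬝ᵥ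
      ((hM.eigenvectorUnitary : Matrix n n ℝ)ᵀ *ᵥ x) := by
  have hU :
      (hM.eigenvectorUnitary : Matrix n n ℝ) * (hM.eigenvectorUnitary : Matrix n n ℝ)ᵀ = 1 := by
    simpa [star_eq_conjTranspose] using Unitary.mul_star_self_of_mem hM.eigenvectorUnitary.2
  rw [dotProduct_mulVec, vecMul_transpose, mulVec_mulVec, hU, one_mulVec]

theorem finrank_le_card_filter_le_eigenvalues (t : ℝ) (W : Submodule ℝ (n → ℝ))
    (hW : ∀ x ∈ W, t * (x ⬝ᵥ x) ≤ x ⬝ᵥ (M *ᵥ x)) :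
    Module.finrank ℝ W ≤ #{i | t ≤ hM.eigenvalues i} := by
  -- If `dim W > #T`, some nonzero `x ∈ W` has no component along the eigenvectors with
  -- eigenvalue `≥ t`, so its Rayleigh quotient is `< t`.
  by_contra! hlt
  set T : Finset n := {i | t ≤ hM.eigenvalues i}
  let coeffsOnT : W →ₗ[ℝ] (T → ℝ) := LinearMap.funLeft ℝ ℝ Subtype.val ∘ₗ
    mulVecLin (hM.eigenvectorUnitary : Matrix n n ℝ)ᵀ ∘ₗ W.subtype
  obtain ⟨x, hx_ker, hx0⟩ := Submodule.exists_mem_ne_zero_of_ne_bot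
    (LinearMap.ker_ne_bot_of_finrank_lt (f := coeffsOnT) (by simpa using hlt))
  set y := (hM.eigenvectorUnitary : Matrix n n ℝ)ᵀ *ᵥ (x : n → ℝ)
  have hyT : ∀ i ∈ T, y i = 0 := fun i hi => congrFun hx_ker ⟨i, hi⟩
  have hxx : (x : n → ℝ) ⬝ᵥ x = y ⬝ᵥ y :=
    hM.dotProduct_self_eq_eigenvectorUnitary_transpose_mulVec x
  have hxMx : (x : n → ℝ) ⬝ᵥ (M *ᵥ x) = ∑ i, hM.eigenvalues i * y i ^ 2 :=
    hM.dotProduct_mulVec_eq_sum_eigenvalues_mul_sq x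
  obtain ⟨j, hj⟩ : ∃ j, y j ≠ 0 := by
    by_contra! hy
    have : (x : n → ℝ) ⬝ᵥ x = 0 := by
      rw [hxx, show y = 0 from funext hy, zero_dotProduct]
    exact hx0 (Subtype.ext (dotProduct_self_eq_zero.mp this))
  have hjT : j ∉ T := fun h => hj (hyT j h)
  have : (x : n → ℝ) ⬝ᵥ (M *ᵥ x) < t * ((x : n → ℝ) ⬝ᵥ x) := by
    rw [hxMx, hxx, dotProduct, mul_sum]
    refine Finset.sum_lt_sum (fun i _ => ?_) ⟨j, mem_univ j, ?_⟩
    · by_cases hi : i ∈ T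
      · simp [hyT i hi]
      · have : hM.eigenvalues i < t := by simpa [T] using hi
        nlinarith [sq_nonneg (y i)]
    · have : hM.eigenvalues j < t := by simpa [T] using hjT
      have : 0 < y j ^ 2 := by positivity
      nlinarith
  exact (hW x x.2).not_gt this

end Matrix.IsHermitian

lemma Real.sqrt_mul_eq_mul_sqrt_div {a : ℝ} (ha : 0 < a) (b : ℝ) : √(a * b) = a * √(b / a) := by
  calc √(a * b) = √(a ^ 2 * (b / a)) := by congr 1; field_simp
    _ = a * √(b / a) := by rw [Real.sqrt_mul (sq_nonneg a), Real.sqrt_sq ha.le]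

lemma sqrt_add_mul_sqrt_le_sum_sqrt {ι : Type*} [Fintype ι] (f : ι → ℝ) {a b : ℝ} (hba : b ≤ a)
    {i₀ : ι} (hi₀ : a ≤ f i₀) {k : ℕ} (hk : k + 1 ≤ #{i | b ≤ f i}) :
    √a + k * √b ≤ ∑ i, √(f i) := by
  set T : Finset ι := {i | b ≤ f i}
  have hi₀T : i₀ ∈ T := by simpa [T] using hba.trans hi₀
  have hkT : k ≤ #(T.erase i₀) := by rw [card_erase_of_mem hi₀T]; omega
  calc √a + k * √b ≤ √(f i₀) + #(T.erase i₀) * √b := by gcongr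
    _ ≤ √(f i₀) + ∑ i ∈ T.erase i₀, √(f i) := by
        rw [← nsmul_eq_mul]
        gcongr
        exact card_nsmul_le_sum _ _ _ fun i hi =>
          Real.sqrt_le_sqrt (mem_filter.mp (mem_of_mem_erase hi)).2
    _ = ∑ i ∈ T, √(f i) := add_sum_erase T (fun i => √(f i)) hi₀T
    _ ≤ ∑ i, √(f i) :=
        sum_le_sum_of_subset_of_nonneg (subset_univ T) fun i _ _ => Real.sqrt_nonneg _

lemma SimpleGraph.IsClique.card_le_degree_add_one {V : Type*} [Fintype V] {G : SimpleGraph V}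
    {S : Finset V} (hS : G.IsClique (S : Set V)) {v : V} (hv : v ∈ S) :
    #S ≤ G.degree v + 1 := by
  have hsub : S.erase v ⊆ G.neighborFinset v := fun w hw => by
    obtain ⟨hwv, hwS⟩ := mem_erase.mp hw
    simpa using hS hv hwS (Ne.symm hwv)
  have := card_le_card hsub
  rw [card_erase_of_mem hv, G.card_neighborFinset_eq_degree] at this
  omega

section Randic

variable {V : Type} [Fintype V] (G : SimpleGraph V)

lemma randicIncidence_mul_conjTranspose_apply_self {v : V} (hv : 0 < G.degree v) :
    (randicIncidence G * (randicIncidence G)ᴴ) v v = 1 := by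
  have hterm : ∀ e : G.edgeSet, randicIncidence G v e * randicIncidence G v e =
      if v ∈ (e : Sym2 V) then ((G.degree v : ℝ))⁻¹ else 0 := by
    intro e
    by_cases he : v ∈ (e : Sym2 V) <;> simp [randicIncidence, he, ← mul_inv]
  rw [mul_apply]
  simp only [conjTranspose_apply, star_trivial, hterm]
  rw [Finset.sum_set_coe (f := fun e => if v ∈ e then ((G.degree v : ℝ))⁻¹ else 0),
    ← Finset.sum_filter, ← SimpleGraph.edgeFinset, ← G.incidenceFinset_eq_filter, sum_const,
    G.card_incidenceFinset_eq_degree, nsmul_eq_mul, mul_inv_cancel₀ (by positivity)]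

lemma randicIncidence_mul_conjTranspose_apply_of_ne {v w : V} (hvw : v ≠ w) :
    (randicIncidence G * (randicIncidence G)ᴴ) v w =
      if G.Adj v w then (√(G.degree v))⁻¹ * (√(G.degree w))⁻¹ else 0 := by
  rw [mul_apply]
  simp only [conjTranspose_apply, randicIncidence, star_trivial, ite_zero_mul_ite_zero,
    Sym2.mem_and_mem_iff hvw]
  rw [Finset.sum_set_coe (f := fun e => if e = s(v, w) then
    (√(G.degree v))⁻¹ * (√(G.degree w))⁻¹ else 0), Finset.sum_ite_eq' G.edgeSet.toFinset]
  simp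

def sqrtDegree : V → ℝ := fun v => √(G.degree v)

lemma randicIncidence_transpose_mulVec_sqrtDegree (e : G.edgeSet) :
    ((randicIncidence G)ᵀ *ᵥ sqrtDegree G) e = 2 := by
  obtain ⟨e, he⟩ := e
  induction e using Sym2.ind with
  | _ a b =>
  have hab : G.Adj a b := he
  have hterm : ∀ v, (randicIncidence G)ᵀ ⟨s(a, b), he⟩ v * sqrtDegree G v =
      if v = a ∨ v = b then 1 else 0 := by
    intro v
    by_cases hv : v = a ∨ v = b
    · have : 0 < G.degree v := by
        rcases hv with rfl | rfl
        exacts [hab.degree_pos_left, hab.degree_pos_right]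
      simp [randicIncidence, sqrtDegree, hv, this.ne']
    · simp [randicIncidence, hv]
  rw [mulVec, dotProduct]
  simp only [hterm]
  have hpair : ({v | v = a ∨ v = b} : Finset V) = {a, b} := by ext; simp
  rw [Finset.sum_boole, hpair, card_pair hab.ne, Nat.cast_ofNat]

lemma sqrtDegree_dotProduct_mulVec :
    sqrtDegree G ⬝ᵥ ((randicIncidence G * (randicIncidence G)ᴴ) *ᵥ sqrtDegree G) =
      2 * (sqrtDegree G ⬝ᵥ sqrtDegree G) := by
  have hquad : sqrtDegree G ⬝ᵥ ((randicIncidence G * (randicIncidence G)ᴴ) *ᵥ sqrtDegree G) =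
      ∑ e : G.edgeSet, ((randicIncidence G)ᵀ *ᵥ sqrtDegree G) e ^ 2 := by
    rw [← mulVec_mulVec, dotProduct_mulVec, conjTranspose_eq_transpose_of_trivial,
      ← mulVec_transpose, dotProduct]
    simp [sq]
  have hnorm : sqrtDegree G ⬝ᵥ sqrtDegree G = ∑ v, (G.degree v : ℝ) := by
    simp [dotProduct, sqrtDegree]
  rw [hquad, hnorm]
  simp only [randicIncidence_transpose_mulVec_sqrtDegree]
  rw [sum_const, card_univ, ← G.edgeFinset_card, ← Nat.cast_sum,
    G.sum_degrees_eq_twice_card_edges]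
  push_cast
  ring

lemma dotProduct_randicIncidence_mulVec_of_isClique {S : Finset V}
    (hS : G.IsClique (S : Set V)) (hdeg : ∀ v ∈ S, 0 < G.degree v) {x : V → ℝ}
    (hx : ∀ v ∉ S, x v = 0) :
    x ⬝ᵥ ((randicIncidence G * (randicIncidence G)ᴴ) *ᵥ x) =
      (∑ v ∈ S, x v / √(G.degree v)) ^ 2 +
        ∑ v ∈ S, (x v ^ 2 - (x v / √(G.degree v)) ^ 2) := by
  -- On the clique, `R Rᵀ = w wᵀ + diag (1 - 1 / d_v)` with `w_v = d_v ^ (-1/2)`.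
  set z : V → ℝ := fun v => x v / √(G.degree v)
  have hentry : ∀ v ∈ S, ∀ w ∈ S, x v * (randicIncidence G * (randicIncidence G)ᴴ) v w * x w =
      z v * z w + if v = w then x v ^ 2 - z v ^ 2 else 0 := by
    intro v hv w hw
    by_cases hvw : v = w
    · subst hvw
      rw [randicIncidence_mul_conjTranspose_apply_self G (hdeg v hv), if_pos rfl]
      ring
    · rw [randicIncidence_mul_conjTranspose_apply_of_ne G hvw, if_pos (hS hv hw hvw), if_neg hvw]
      simp only [z, div_eq_mul_inv]
      ring
  have hsupp : ∀ y : V → ℝ, x ⬝ᵥ y = ∑ v ∈ S, x v * y v := fun y =>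
    (sum_subset (subset_univ S) fun v _ hv => by simp [hx v hv]).symm
  calc x ⬝ᵥ ((randicIncidence G * (randicIncidence G)ᴴ) *ᵥ x)
      = ∑ v ∈ S, ∑ w ∈ S, x v * (randicIncidence G * (randicIncidence G)ᴴ) v w * x w := by
        rw [hsupp]
        refine sum_congr rfl fun v _ => ?_
        rw [mulVec, dotProduct_comm, hsupp, mul_sum]
        exact sum_congr rfl fun w _ => by ring
    _ = (∑ v ∈ S, z v) ^ 2 + ∑ v ∈ S, (x v ^ 2 - z v ^ 2) := by
        rw [sum_congr rfl fun v hv => sum_congr rfl fun w hw => hentry v hv w hw]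
        simp only [sum_add_distrib, sum_ite_eq, sq, sum_mul_sum]
        exact congrArg _ (sum_congr rfl fun v hv => if_pos hv)

lemma le_dotProduct_randicIncidence_mulVec_of_isNClique {k : ℕ} {S : Finset V}
    (hS : G.IsNClique k S) (hk : 2 ≤ k) {x : V → ℝ} (hx : ∀ v ∉ S, x v = 0) :
    ((k : ℝ) - 2) / ((k : ℝ) - 1) * (x ⬝ᵥ x) ≤
      x ⬝ᵥ ((randicIncidence G * (randicIncidence G)ᴴ) *ᵥ x) := by
  have hk1 : (0 : ℝ) < k - 1 := by
    have : (2 : ℝ) ≤ k := by exact_mod_cast hk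
    linarith
  have hdeg : ∀ v ∈ S, (k : ℝ) - 1 ≤ G.degree v := fun v hv => by
    have := hS.isClique.card_le_degree_add_one hv
    rw [hS.card_eq] at this
    have : (k : ℝ) ≤ G.degree v + 1 := by exact_mod_cast this
    linarith
  have hz : ∀ v ∈ S, (x v / √(G.degree v)) ^ 2 ≤ x v ^ 2 / (k - 1) := fun v hv => by
    rw [div_pow, Real.sq_sqrt (Nat.cast_nonneg _)]
    exact div_le_div_of_nonneg_left (sq_nonneg _) hk1 (hdeg v hv)
  have hxx : x ⬝ᵥ x = ∑ v ∈ S, x v ^ 2 := by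
    simp only [dotProduct, ← sq]
    exact (sum_subset (subset_univ S) fun v _ hv => by simp [hx v hv]).symm
  calc ((k : ℝ) - 2) / ((k : ℝ) - 1) * (x ⬝ᵥ x)
      = ∑ v ∈ S, (x v ^ 2 - x v ^ 2 / (k - 1)) := by
        rw [hxx, mul_sum]
        refine sum_congr rfl fun v _ => ?_
        field_simp
        ring
    _ ≤ ∑ v ∈ S, (x v ^ 2 - (x v / √(G.degree v)) ^ 2) :=
        sum_le_sum fun v hv => by linarith [hz v hv]
    _ ≤ x ⬝ᵥ ((randicIncidence G * (randicIncidence G)ᴴ) *ᵥ x) := by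
        rw [dotProduct_randicIncidence_mulVec_of_isClique G hS.isClique
          (fun v hv => by exact_mod_cast hk1.trans_le (hdeg v hv)) hx]
        exact le_add_of_nonneg_left (sq_nonneg _)

lemma exists_two_le_eigenvalue_randicIncidence_mul_conjTranspose {v : V}
    (hv : 0 < G.degree v) :
    ∃ i, 2 ≤ (isHermitian_mul_conjTranspose_self (randicIncidence G)).eigenvalues i := by
  have hu : sqrtDegree G ≠ 0 := fun h => by
    have := congrFun h v
    simp only [sqrtDegree, Pi.zero_apply] at this
    exact (Real.sqrt_pos.mpr (by exact_mod_cast hv)).ne' this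
  have hcount := (isHermitian_mul_conjTranspose_self (randicIncidence G))
    |>.finrank_le_card_filter_le_eigenvalues 2 (ℝ ∙ sqrtDegree G) fun x hx => by
      obtain ⟨r, rfl⟩ := Submodule.mem_span_singleton.mp hx
      simp only [smul_dotProduct, dotProduct_smul, mulVec_smul, smul_eq_mul,
        sqrtDegree_dotProduct_mulVec]
      exact le_of_eq (by ring)
  rw [finrank_span_singleton hu] at hcount
  obtain ⟨i, hi⟩ := card_pos.mp hcount
  exact ⟨i, (mem_filter.mp hi).2⟩

lemma card_le_card_eigenvalues_randicIncidence_mul_conjTranspose_of_isNClique {k : ℕ}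
    {S : Finset V} (hS : G.IsNClique k S) (hk : 2 ≤ k) :
    k ≤ #{i | ((k : ℝ) - 2) / ((k : ℝ) - 1) ≤
      (isHermitian_mul_conjTranspose_self (randicIncidence G)).eigenvalues i} := by
  let e : S → V → ℝ := fun v => Pi.single (v : V) 1
  have he : LinearIndependent ℝ e :=
    (Pi.basisFun ℝ V).linearIndependent.comp _ Subtype.val_injective
  have hcount := (isHermitian_mul_conjTranspose_self (randicIncidence G))
    |>.finrank_le_card_filter_le_eigenvalues _ (Submodule.span ℝ (Set.range e)) fun x hx => by
      refine le_dotProduct_randicIncidence_mulVec_of_isNClique G hS hk fun v hv => ?_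
      obtain ⟨c, rfl⟩ := (Submodule.mem_span_range_iff_exists_fun ℝ).mp hx
      rw [Finset.sum_apply]
      exact sum_eq_zero fun w _ => by simp [e, ne_of_mem_of_not_mem w.2 hv |>.symm]
  rwa [finrank_span_eq_card he, Fintype.card_coe, hS.card_eq] at hcount

end Randic

theorem randicIncidenceEnergy_cliqueNum_lower_bound {V : Type} [Fintype V]
    (G : SimpleGraph V) (c : ℕ) (hc : G.cliqueNum = c) (hc2 : 2 ≤ c) :
    Real.sqrt 2 + Real.sqrt (((c : ℝ) - 1) * ((c : ℝ) - 2)) ≤ randicIncidenceEnergy G ∧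
      (G.edgeSet.Nonempty → Real.sqrt 2 ≤ randicIncidenceEnergy G) := by
  obtain ⟨S, hS⟩ := G.exists_isNClique_cliqueNum
  rw [hc] at hS
  have hcard := hS.card_eq
  obtain ⟨v, hv⟩ : S.Nonempty := card_pos.mp (by omega)
  have hdeg := hS.isClique.card_le_degree_add_one hv
  obtain ⟨i₀, hi₀⟩ := exists_two_le_eigenvalue_randicIncidence_mul_conjTranspose G (v := v)
    (by omega)
  have hcount := card_le_card_eigenvalues_randicIncidence_mul_conjTranspose_of_isNClique G hS hc2
  have hc1 : (1 : ℝ) ≤ c - 1 := by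
    have : (2 : ℝ) ≤ c := by exact_mod_cast hc2
    linarith
  have hthreshold : ((c : ℝ) - 2) / (c - 1) ≤ 2 := by
    rw [div_le_iff₀ (by linarith)]
    linarith
  have hsqrt : √(((c : ℝ) - 1) * (c - 2)) = ((c - 1 : ℕ) : ℝ) * √((c - 2) / (c - 1)) := by
    rw [Nat.cast_sub (by omega), Nat.cast_one, Real.sqrt_mul_eq_mul_sqrt_div (by linarith)]
  have hmain : √2 + √(((c : ℝ) - 1) * (c - 2)) ≤ randicIncidenceEnergy G := by
    rw [hsqrt]
    exact sqrt_add_mul_sqrt_le_sum_sqrt _ hthreshold hi₀ (by omega)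
  exact ⟨hmain, fun _ => by linarith [Real.sqrt_nonneg (((c : ℝ) - 1) * (c - 2))]⟩
end
end
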